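/- arXiv:2307.03748 — 6 statements merged into one kernel-verified Lean document; each statement's English description precedes it below -/
import Mathlib

section
/- Let (Θ, 𝓕) be a measurable space, Q a probability measure on Θ (the agent's prior), Θ₀ ⊆ Θ a measurable set (the null set) with complement Θ₁, and β : Θ → ℝ a measurable function with 0 ≤ β(θ) ≤ 1 for all θ (the power function, β(θ) being the probability of approval when the parameter is θ). Let C, R, τ be real numbers with R > 0 and τ > 0. Assume the p-value is valid under the null, i.e. β(θ) ≤ τ for every θ ∈ Θ₀, and assume the agent's participation constraint ∫_Θ β dQ ≥ C/R holds. Then τ · ∫_{Θ₁} β dQ ≥ (C/R − τ) · ∫_{Θ₀} β dQ; in particular, if ∫_{Θ₀} β dQ > 0, the posterior odds of nonnull given approval satisfy (∫_{Θ₁} β dQ) / (∫_{Θ₀} β dQ) ≥ (C/R − τ)/τ. -/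
/-!
Split the approval probability `∫ β dQ = I₀ + I₁` over the null set and its complement.
Validity gives `I₀ ≤ τ`, so participation forces `I₁ ≥ C/R - τ`; multiplying this by `I₀ ≤ τ`
yields `(C/R - τ) I₀ ≤ τ I₁`.
-/

open MeasureTheory

theorem sub_mul_le_mul_of_le_add {a b c τ : ℝ} (ha : 0 ≤ a) (hb : 0 ≤ b) (haτ : a ≤ τ)
    (hc : c ≤ a + b) : (c - τ) * a ≤ τ * b := by
  nlinarith

theorem sub_div_le_div_of_le_add {a b c τ : ℝ} (ha : 0 < a) (hb : 0 ≤ b) (haτ : a ≤ τ)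
    (hc : c ≤ a + b) : (c - τ) / τ ≤ b / a := by
  rw [div_le_div_iff₀ (ha.trans_le haτ) ha]
  linarith [sub_mul_le_mul_of_le_add ha.le hb haτ hc]

theorem setIntegral_le_of_norm_le_const {α : Type*} [MeasurableSpace α] {μ : Measure α}
    [IsZeroOrProbabilityMeasure μ] {s : Set α} {f : α → ℝ} {c : ℝ} (hc : 0 ≤ c)
    (hf : ∀ x ∈ s, ‖f x‖ ≤ c) : ∫ x in s, f x ∂μ ≤ c :=
  calc ∫ x in s, f x ∂μ ≤ ‖∫ x in s, f x ∂μ‖ := Real.le_norm_self _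
    _ ≤ c * μ.real s := norm_setIntegral_le_of_norm_le_const (measure_lt_top μ s) hf
    _ ≤ c := mul_le_of_le_one_right hc measureReal_le_one

theorem posterior_odds_bound_general
    {Θ : Type*} [MeasurableSpace Θ]
    (Q : Measure Θ) [IsProbabilityMeasure Q]
    (Θ₀ : Set Θ) (hΘ₀ : MeasurableSet Θ₀)
    (β : Θ → ℝ) (hβmeas : Measurable β)
    (hβ0 : ∀ θ, 0 ≤ β θ) (hβ1 : ∀ θ, β θ ≤ 1)
    (C R τ : ℝ) (hτ : 0 < τ)
    (hvalid : ∀ θ ∈ Θ₀, β θ ≤ τ)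
    (hparticipate : ∫ θ, β θ ∂Q ≥ C / R) :
    τ * ∫ θ in Θ₀ᶜ, β θ ∂Q ≥ (C / R - τ) * ∫ θ in Θ₀, β θ ∂Q ∧
      ((0 < ∫ θ in Θ₀, β θ ∂Q) →
        (∫ θ in Θ₀ᶜ, β θ ∂Q) / (∫ θ in Θ₀, β θ ∂Q) ≥ (C / R - τ) / τ) := by
  have hnorm : ∀ θ, ‖β θ‖ = β θ := fun θ => Real.norm_of_nonneg (hβ0 θ)
  have hint : Integrable β Q :=
    .of_bound hβmeas.aestronglyMeasurable 1 (ae_of_all _ fun θ => (hnorm θ).trans_le (hβ1 θ))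
  have hsplit : C / R ≤ (∫ θ in Θ₀, β θ ∂Q) + ∫ θ in Θ₀ᶜ, β θ ∂Q :=
    integral_add_compl hΘ₀ hint ▸ hparticipate
  have hI₀ : 0 ≤ ∫ θ in Θ₀, β θ ∂Q := setIntegral_nonneg hΘ₀ fun θ _ => hβ0 θ
  have hI₁ : 0 ≤ ∫ θ in Θ₀ᶜ, β θ ∂Q := setIntegral_nonneg hΘ₀.compl fun θ _ => hβ0 θ
  have hI₀τ : ∫ θ in Θ₀, β θ ∂Q ≤ τ :=
    setIntegral_le_of_norm_le_const hτ.le fun θ hθ => (hnorm θ).trans_le (hvalid θ hθ)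
  exact ⟨sub_mul_le_mul_of_le_add hI₀ hI₁ hI₀τ hsplit,
    fun hpos => sub_div_le_div_of_le_add hpos hI₁ hI₀τ hsplit⟩

/-- Theorem 1 (incentive-theoretic bound on the posterior odds of nonnull). -/
theorem posterior_odds_bound
    {Θ : Type*} [MeasurableSpace Θ]
    (Q : Measure Θ) [IsProbabilityMeasure Q]
    (Θ₀ : Set Θ) (hΘ₀ : MeasurableSet Θ₀)
    (β : Θ → ℝ) (hβmeas : Measurable β)
    (hβ0 : ∀ θ, 0 ≤ β θ) (hβ1 : ∀ θ, β θ ≤ 1)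
    (C R τ : ℝ) (hR : 0 < R) (hτ : 0 < τ)
    (hvalid : ∀ θ ∈ Θ₀, β θ ≤ τ)
    (hparticipate : ∫ θ, β θ ∂Q ≥ C / R) :
    τ * ∫ θ in Θ₀ᶜ, β θ ∂Q ≥ (C / R - τ) * ∫ θ in Θ₀, β θ ∂Q ∧
      ((0 < ∫ θ in Θ₀, β θ ∂Q) →
        (∫ θ in Θ₀ᶜ, β θ ∂Q) / (∫ θ in Θ₀, β θ ∂Q) ≥ (C / R - τ) / τ) :=
  posterior_odds_bound_general Q Θ₀ hΘ₀ β hβmeas hβ0 hβ1 C R τ hτ hvalid hparticipate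
end

section
/- Let (Θ, 𝓕) be a measurable space, Q a probability measure on Θ, Θ₀ ⊆ Θ a measurable set, and β : Θ → ℝ measurable with 0 ≤ β(θ) ≤ 1 for all θ. Let C, R, τ be real numbers with C > 0, R > 0, τ > 0. Assume β(θ) ≤ τ for every θ ∈ Θ₀ and ∫_Θ β dQ ≥ C/R. Then ∫_Θ β dQ > 0 and the posterior probability of the null given approval satisfies (∫_{Θ₀} β dQ) / (∫_Θ β dQ) ≤ τ·R/C. -/
open MeasureTheory

theorem MeasureTheory.setIntegral_le_of_forall_le {α : Type*} [MeasurableSpace α]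
    {μ : Measure α} [IsZeroOrProbabilityMeasure μ] {s : Set α} (hs : MeasurableSet s)
    {f : α → ℝ} (hf : IntegrableOn f s μ) {c : ℝ} (hc : 0 ≤ c) (h : ∀ x ∈ s, f x ≤ c) :
    ∫ x in s, f x ∂μ ≤ c :=
  calc ∫ x in s, f x ∂μ ≤ ∫ _ in s, c ∂μ :=
        setIntegral_mono_on hf (integrableOn_const (measure_ne_top μ s)) hs h
    _ = μ.real s * c := by rw [setIntegral_const, smul_eq_mul]
    _ ≤ 1 * c := mul_le_mul_of_nonneg_right measureReal_le_one hc
    _ = c := one_mul c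

theorem bayes_fdr_bound_general
    {Θ : Type*} [MeasurableSpace Θ]
    (Q : Measure Θ) [IsProbabilityMeasure Q]
    (Θ₀ : Set Θ) (hΘ₀ : MeasurableSet Θ₀)
    (β : Θ → ℝ)
    (C R τ : ℝ) (hC : 0 < C) (hR : 0 < R) (hτ : 0 < τ)
    (hvalid : ∀ θ ∈ Θ₀, β θ ≤ τ)
    (hparticipate : ∫ θ, β θ ∂Q ≥ C / R) :
    0 < ∫ θ, β θ ∂Q ∧
      (∫ θ in Θ₀, β θ ∂Q) / (∫ θ, β θ ∂Q) ≤ τ * R / C := by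
  have hCR : 0 < C / R := div_pos hC hR
  have hpos : 0 < ∫ θ, β θ ∂Q := hCR.trans_le hparticipate
  -- a non-integrable `β` would have integral `0`
  have hint : Integrable β Q := .of_integral_ne_zero hpos.ne'
  have hnull : ∫ θ in Θ₀, β θ ∂Q ≤ τ :=
    setIntegral_le_of_forall_le hΘ₀ hint.integrableOn hτ.le hvalid
  refine ⟨hpos, ?_⟩
  calc (∫ θ in Θ₀, β θ ∂Q) / (∫ θ, β θ ∂Q) ≤ τ / (C / R) :=
        div_le_div₀ hτ.le hnull hCR hparticipate
    _ = τ * R / C := by field_simp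

/-- Theorem 1, rearranged form (equation (3)): the Bayes FDR is at most τR/C. -/
theorem bayes_fdr_bound
    {Θ : Type*} [MeasurableSpace Θ]
    (Q : Measure Θ) [IsProbabilityMeasure Q]
    (Θ₀ : Set Θ) (hΘ₀ : MeasurableSet Θ₀)
    (β : Θ → ℝ) (hβmeas : Measurable β)
    (hβ0 : ∀ θ, 0 ≤ β θ) (hβ1 : ∀ θ, β θ ≤ 1)
    (C R τ : ℝ) (hC : 0 < C) (hR : 0 < R) (hτ : 0 < τ)
    (hvalid : ∀ θ ∈ Θ₀, β θ ≤ τ)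
    (hparticipate : ∫ θ, β θ ∂Q ≥ C / R) :
    0 < ∫ θ, β θ ∂Q ∧
      (∫ θ in Θ₀, β θ ∂Q) / (∫ θ, β θ ∂Q) ≤ τ * R / C :=
  bayes_fdr_bound_general Q Θ₀ hΘ₀ β C R τ hC hR hτ hvalid hparticipate
end

section
/- Let (Θ, 𝓕) and (𝒳, 𝓖) be measurable spaces, Q a probability measure on Θ, κ a Markov kernel from Θ to 𝒳 (the law of the evidence X given the parameter θ), Θ₀ ⊆ Θ a measurable set, and A ⊆ 𝒳 a measurable set (the approval region). Let C, R, τ be reals with C > 0, R > 0, τ > 0. Assume κ(θ)(A) ≤ τ for every θ ∈ Θ₀, and ∫_Θ κ(θ)(A) dQ(θ) ≥ C/R. Let μ = Q ⊗ κ be the joint probability measure on Θ × 𝒳 (the composition-product of Q with κ). Then μ(Θ × A) > 0 and μ(Θ₀ × A) / μ(Θ × A) ≤ τ·R/C. -/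
open MeasureTheory ProbabilityTheory

/-- Theorem 1 stated in terms of the joint law `Q ⊗ₘ κ` of parameter and evidence. -/
theorem bayes_fdr_bound_joint
    {Θ 𝒳 : Type*} [MeasurableSpace Θ] [MeasurableSpace 𝒳]
    (Q : Measure Θ) [IsProbabilityMeasure Q]
    (κ : Kernel Θ 𝒳) [IsMarkovKernel κ]
    (Θ₀ : Set Θ) (hΘ₀ : MeasurableSet Θ₀)
    (A : Set 𝒳) (hA : MeasurableSet A)
    (C R τ : ℝ) (hC : 0 < C) (hR : 0 < R) (hτ : 0 < τ)
    (hvalid : ∀ θ ∈ Θ₀, (κ θ A).toReal ≤ τ)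
    (hparticipate : ∫ θ, (κ θ A).toReal ∂Q ≥ C / R) :
    0 < (Q ⊗ₘ κ) (Set.univ ×ˢ A) ∧
      ((Q ⊗ₘ κ) (Θ₀ ×ˢ A)).toReal / ((Q ⊗ₘ κ) (Set.univ ×ˢ A)).toReal ≤ τ * R / C := by
  have hmeas : Measurable fun θ => κ θ A := Kernel.measurable_coe κ hA
  have huniv : (Q ⊗ₘ κ) (Set.univ ×ˢ A) = ∫⁻ θ, κ θ A ∂Q := by
    rw [Measure.compProd_apply_prod MeasurableSet.univ hA, Measure.restrict_univ]
  have h0 : (Q ⊗ₘ κ) (Θ₀ ×ˢ A) = ∫⁻ θ in Θ₀, κ θ A ∂Q :=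
    Measure.compProd_apply_prod hΘ₀ hA
  have hfin : ∫⁻ θ, κ θ A ∂Q ≠ ⊤ := by
    have : ∫⁻ θ, κ θ A ∂Q ≤ ∫⁻ _, 1 ∂Q := lintegral_mono fun θ => prob_le_one
    simp only [lintegral_one, measure_univ, mul_one] at this
    exact ne_top_of_le_ne_top (by simp) this
  have htoReal : (∫⁻ θ, κ θ A ∂Q).toReal = ∫ θ, (κ θ A).toReal ∂Q := by
    rw [integral_toReal hmeas.aemeasurable (ae_of_all _ fun θ => measure_lt_top _ _)]
  have hCR : 0 < C / R := div_pos hC hR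
  have hgeC : C / R ≤ (∫⁻ θ, κ θ A ∂Q).toReal := htoReal ▸ hparticipate
  have hpos : 0 < (Q ⊗ₘ κ) (Set.univ ×ˢ A) := by
    rw [huniv]
    by_contra h
    push_neg at h
    simp only [nonpos_iff_eq_zero] at h
    rw [h] at hgeC
    simp at hgeC
    linarith
  refine ⟨hpos, ?_⟩
  -- numerator bound: μ(Θ₀ × A) ≤ ofReal τ
  have hnum : (Q ⊗ₘ κ) (Θ₀ ×ˢ A) ≤ ENNReal.ofReal τ := by
    rw [h0]
    calc ∫⁻ θ in Θ₀, κ θ A ∂Q ≤ ∫⁻ _ in Θ₀, ENNReal.ofReal τ ∂Q := by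
          refine setLIntegral_mono_ae (by fun_prop) (ae_of_all _ fun θ hθ => ?_)
          rw [← ENNReal.ofReal_toReal (measure_ne_top _ _)]
          exact ENNReal.ofReal_le_ofReal (hvalid θ hθ)
      _ = ENNReal.ofReal τ * Q Θ₀ := by simp [mul_comm]
      _ ≤ ENNReal.ofReal τ * 1 := by gcongr; exact prob_le_one
      _ = ENNReal.ofReal τ := mul_one _
  have hnumR : ((Q ⊗ₘ κ) (Θ₀ ×ˢ A)).toReal ≤ τ := by
    calc ((Q ⊗ₘ κ) (Θ₀ ×ˢ A)).toReal ≤ (ENNReal.ofReal τ).toReal :=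
          ENNReal.toReal_mono (by simp) hnum
      _ = τ := ENNReal.toReal_ofReal hτ.le
  have hdenR : 0 < ((Q ⊗ₘ κ) (Set.univ ×ˢ A)).toReal := by
    rw [huniv, htoReal]; linarith
  have hden_ge : C / R ≤ ((Q ⊗ₘ κ) (Set.univ ×ˢ A)).toReal := by
    rw [huniv]; exact hgeC
  calc ((Q ⊗ₘ κ) (Θ₀ ×ˢ A)).toReal / ((Q ⊗ₘ κ) (Set.univ ×ˢ A)).toReal
      ≤ τ / (C / R) := by
        apply div_le_div₀ (le_of_lt hτ) hnumR hCR hden_ge |>.trans_eq rfl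
    _ = τ * R / C := by field_simp
end

section
/- Let n be a positive integer, p : Fin n → ℝ with 0 ≤ p(i) ≤ 1 for all i, and N ⊆ Fin n (the set of indices of null agents). Let C, R, τ be reals with R > 0 and 0 < τ < C/R. Assume p(i) ≤ τ for every i ∈ N. If the agents' total expected profit is nonnegative, i.e. ∑_{i=1}^n (R·p(i) − C) ≥ 0, then τ · ∑_{i ∉ N} p(i) ≥ (C/R − τ) · ∑_{i ∈ N} p(i); in particular, if ∑_{i ∈ N} p(i) > 0, the ratio of the expected number of true positives to the expected number of false positives satisfies (∑_{i ∉ N} p(i)) / (∑_{i ∈ N} p(i)) ≥ (C/R − τ)/τ. -/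
/-- Theorem 2 (prior-free incentive-theoretic bound). -/
theorem prior_free_bound
    (n : ℕ) (hn : 0 < n) (p : Fin n → ℝ)
    (hp0 : ∀ i, 0 ≤ p i) (hp1 : ∀ i, p i ≤ 1)
    (N : Finset (Fin n))
    (C R τ : ℝ) (hR : 0 < R) (hτ0 : 0 < τ) (hτ : τ < C / R)
    (hvalid : ∀ i ∈ N, p i ≤ τ)
    (hprofit : ∑ i, (R * p i - C) ≥ 0) :
    τ * ∑ i ∈ Nᶜ, p i ≥ (C / R - τ) * ∑ i ∈ N, p i ∧
      ((0 < ∑ i ∈ N, p i) →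
        (∑ i ∈ Nᶜ, p i) / (∑ i ∈ N, p i) ≥ (C / R - τ) / τ) := by
  set S := ∑ i ∈ N, p i with hS
  set T := ∑ i ∈ Nᶜ, p i with hT
  have hsplit : S + T = ∑ i, p i := Finset.sum_add_sum_compl N p
  have hsum : (n : ℝ) * (C / R) ≤ S + T := by
    rw [hsplit]
    have h1 : (n : ℝ) * C ≤ R * ∑ i, p i := by
      have := hprofit
      rw [Finset.sum_sub_distrib, Finset.sum_const, Finset.card_univ,
        Fintype.card_fin, ← Finset.mul_sum] at this
      simp only [nsmul_eq_mul] at this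
      linarith
    rw [mul_div_assoc', div_le_iff₀ hR]
    linarith [h1]
  have hSτ : S ≤ τ * n := by
    calc S ≤ ∑ _i ∈ N, τ := Finset.sum_le_sum hvalid
    _ = τ * N.card := by rw [Finset.sum_const, nsmul_eq_mul, mul_comm]
    _ ≤ τ * n := by
        have : (N.card : ℝ) ≤ n := by
          exact_mod_cast Finset.card_le_card (Finset.subset_univ N) |>.trans
            (le_of_eq (by simp))
        nlinarith
  have hCR : 0 < C / R := lt_trans hτ0 hτ
  have main : τ * T ≥ (C / R - τ) * S := by nlinarith
  refine ⟨main, fun hSpos => ?_⟩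
  rw [ge_iff_le, div_le_div_iff₀ hτ0 hSpos]
  nlinarith
end

section
/- Let n be a positive integer, p : Fin n → ℝ with 0 ≤ p(i) ≤ 1 for all i, and N ⊆ Fin n (the set of indices of null agents). Let C, R, τ be reals with R > 0 and 0 < τ < C/R. Assume p(i) ≤ τ for every i ∈ N. If the agents' total expected profit is strictly positive, i.e. ∑_{i=1}^n (R·p(i) − C) > 0, then τ · ∑_{i ∉ N} p(i) > (C/R − τ) · ∑_{i ∈ N} p(i). -/
/-- Theorem 2, strict-inequality part. -/
theorem prior_free_bound_strict
    (n : ℕ) (hn : 0 < n) (p : Fin n → ℝ)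
    (hp0 : ∀ i, 0 ≤ p i) (hp1 : ∀ i, p i ≤ 1)
    (N : Finset (Fin n))
    (C R τ : ℝ) (hR : 0 < R) (hτ0 : 0 < τ) (hτ : τ < C / R)
    (hvalid : ∀ i ∈ N, p i ≤ τ)
    (hprofit : ∑ i, (R * p i - C) > 0) :
    τ * ∑ i ∈ Nᶜ, p i > (C / R - τ) * ∑ i ∈ N, p i := by
  set S0 := ∑ i ∈ N, p i with hS0
  set S1 := ∑ i ∈ Nᶜ, p i with hS1
  have hsplit : S0 + S1 = ∑ i, p i := by
    rw [hS0, hS1]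
    exact Finset.sum_add_sum_compl N p
  have hsum : (n : ℝ) * (C / R) < S0 + S1 := by
    rw [hsplit]
    have h1 : ∑ i, (R * p i - C) = R * ∑ i, p i - n * C := by
      rw [Finset.sum_sub_distrib, ← Finset.mul_sum, Finset.sum_const,
        Finset.card_univ, Fintype.card_fin, nsmul_eq_mul]
    rw [h1] at hprofit
    rw [show (n:ℝ)*(C/R) = n*C/R by ring, div_lt_iff₀ hR]
    nlinarith
  have hS0le : S0 ≤ τ * N.card := by
    calc S0 ≤ ∑ _i ∈ N, τ := Finset.sum_le_sum hvalid
    _ = τ * N.card := by rw [Finset.sum_const, nsmul_eq_mul, mul_comm]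
  have hcard : (N.card : ℝ) ≤ n := by
    exact_mod_cast (Finset.card_le_univ N).trans_eq (by simp)
  have hCR : 0 < C / R := hτ0.trans hτ
  have key : (C / R) * S0 < τ * (S0 + S1) := by
    calc (C / R) * S0 ≤ (C / R) * (τ * N.card) := by
          exact mul_le_mul_of_nonneg_left hS0le hCR.le
    _ ≤ (C / R) * (τ * n) := by
          apply mul_le_mul_of_nonneg_left _ hCR.le
          exact mul_le_mul_of_nonneg_left hcard hτ0.le
    _ = τ * ((n : ℝ) * (C / R)) := by ring
    _ < τ * (S0 + S1) := by exact mul_lt_mul_of_pos_left hsum hτ0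
  nlinarith
end

section
/- Let n be a positive integer, p : Fin n → ℝ with 0 ≤ p(i) ≤ 1 for all i, and N ⊆ Fin n. Let C, R, τ be reals with R > 0 and 0 < τ ≤ C/R, and assume p(i) ≤ τ for every i ∈ N. Then the agents' total normalized expected profit is bounded above by the principal's total value: ∑_{i=1}^n (p(i) − C/R) ≤ ∑_{i ∉ N} p(i) − ((C/R − τ)/τ) · ∑_{i ∈ N} p(i). In particular, if the expected number of false positives ∑_{i ∈ N} p(i) is large relative to the expected number of true positives ∑_{i ∉ N} p(i) (so that the right-hand side is negative), then the agents' total expected profit R·∑(p(i) − C/R) is negative and decreases linearly in that excess. -/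
/-- Summed form of the key comparison `v^p_i ≥ v^a_i` in the proof of Theorem 2. -/
theorem total_profit_le_principal_value
    (n : ℕ) (hn : 0 < n) (p : Fin n → ℝ)
    (hp0 : ∀ i, 0 ≤ p i) (hp1 : ∀ i, p i ≤ 1)
    (N : Finset (Fin n))
    (C R τ : ℝ) (hR : 0 < R) (hτ0 : 0 < τ) (hτ : τ ≤ C / R)
    (hvalid : ∀ i ∈ N, p i ≤ τ) :
    ∑ i, (p i - C / R) ≤ ∑ i ∈ Nᶜ, p i - ((C / R - τ) / τ) * ∑ i ∈ N, p i := by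
  have hCR : 0 < C / R := lt_of_lt_of_le hτ0 hτ
  have hsplit : ∑ i, (p i - C / R)
      = ∑ i ∈ N, (p i - C / R) + ∑ i ∈ Nᶜ, (p i - C / R) :=
    (Finset.sum_add_sum_compl N _).symm
  rw [hsplit]
  have h1 : ∑ i ∈ N, (p i - C / R) ≤ -(((C / R - τ) / τ) * ∑ i ∈ N, p i) := by
    rw [Finset.mul_sum, ← Finset.sum_neg_distrib]
    refine Finset.sum_le_sum fun i hi => ?_
    have hpi := hvalid i hi
    have hpi0 := hp0 i
    have key : p i * (C / R) / τ ≤ C / R := by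
      rw [div_le_iff₀ hτ0]
      calc p i * (C / R) ≤ τ * (C / R) := by nlinarith
        _ = C / R * τ := by ring
    have : p i + (C / R - τ) / τ * p i = p i * (C / R) / τ := by
      field_simp; ring
    linarith
  have h2 : ∑ i ∈ Nᶜ, (p i - C / R) ≤ ∑ i ∈ Nᶜ, p i :=
    Finset.sum_le_sum fun i _ => by linarith
  linarith
end
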